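/- arXiv:2406.16874 — 4 statements merged into one kernel-verified Lean document; each statement's English description precedes it below -/
import Mathlib

section
/- Consider the QP setting, and assume that for all x ∈ B, L_g h(x) ≠ 0. Fix x ∈ ℝ^n and define λ(x) = −ω(x)/d(x) if x ∈ Ω and λ(x) = 0 otherwise, u(x) = −Q(x)^{-1}(c(x) − L_g h(x)^T λ(x)), and μ(x) = h(x) λ(x)/γ. Then the pair (u(x), μ(x)) is the unique global minimizer over (ũ, μ̃) ∈ ℝ^m × ℝ of the cost (1/2) ũ^T Q(x) ũ + c(x)^T ũ + (γ/2) μ̃^2 subject to the constraint L_f h(x) + L_g h(x) ũ + α(h(x)) + μ̃ h(x) ≥ 0. -/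
open Matrix

/-- Lie derivative of `h` along the vector field `f`: `L_f h(x) = h′(x) f(x)`. -/
noncomputable def LieF {n : ℕ} (h : (Fin n → ℝ) → ℝ) (f : (Fin n → ℝ) → Fin n → ℝ)
    (x : Fin n → ℝ) : ℝ :=
  fderiv ℝ h x (f x)

/-- Lie derivative of `h` along the columns of `g`: `L_g h(x) = h′(x) g(x)`. -/
noncomputable def LieG {n m : ℕ} (h : (Fin n → ℝ) → ℝ)
    (g : (Fin n → ℝ) → Fin n → Fin m → ℝ) (x : Fin n → ℝ) : Fin m → ℝ :=
  fun i => fderiv ℝ h x (fun k => g x k i)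

/-!
The problem is a strictly convex quadratic program in `(ũ, μ̃)` with a single affine
constraint, so a point satisfying the KKT conditions is its unique global minimizer.
The closed form is such a point for the multiplier `λ = max(0, -ω/d)`: stationarity holds
by construction, and the constraint value at it is `ω + λ d`, which vanishes when `λ > 0`
and equals `ω ≥ 0` when `λ = 0`. On `Ω` we have `d > 0`: if `h(x) = 0` and `L_g h(x) = 0`,
then `ω(x) = L_f h(x) < 0` puts `x` in `B`, where `L_g h ≠ 0`.
-/

section RelaxedQP

variable {ι : Type*} [Fintype ι]

noncomputable def relaxedCost (Q : Matrix ι ι ℝ) (c : ι → ℝ) (γ : ℝ) (v : ι → ℝ) (μ : ℝ) : ℝ :=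
  1 / 2 * (v ⬝ᵥ Q *ᵥ v) + c ⬝ᵥ v + γ / 2 * μ ^ 2

lemma Matrix.IsHermitian.dotProduct_mulVec_comm {Q : Matrix ι ι ℝ} (hQ : Q.IsHermitian)
    (v w : ι → ℝ) : v ⬝ᵥ Q *ᵥ w = w ⬝ᵥ Q *ᵥ v := by
  have hsymm : Qᵀ = Q := by rw [← conjTranspose_eq_transpose_of_trivial]; exact hQ.eq
  rw [dotProduct_mulVec, ← mulVec_transpose, hsymm, dotProduct_comm]

lemma relaxedCost_add {Q : Matrix ι ι ℝ} (hQ : Q.IsHermitian) (c : ι → ℝ) (γ : ℝ)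
    (v Δ : ι → ℝ) (μ δ : ℝ) :
    relaxedCost Q c γ (v + Δ) (μ + δ) = relaxedCost Q c γ v μ
      + (Δ ⬝ᵥ (Q *ᵥ v + c) + γ * μ * δ) + (1 / 2 * (Δ ⬝ᵥ Q *ᵥ Δ) + γ / 2 * δ ^ 2) := by
  simp only [relaxedCost, mulVec_add, dotProduct_add, add_dotProduct,
    hQ.dotProduct_mulVec_comm v Δ, dotProduct_comm c Δ]
  ring

lemma Matrix.PosDef.dotProduct_mulVec_add_mul_sq_pos {Q : Matrix ι ι ℝ} (hQ : Q.PosDef)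
    {γ : ℝ} (hγ : 0 < γ) {Δ : ι → ℝ} {δ : ℝ} (hne : Δ ≠ 0 ∨ δ ≠ 0) :
    0 < Δ ⬝ᵥ Q *ᵥ Δ + γ * δ ^ 2 := by
  have hQΔ : 0 ≤ Δ ⬝ᵥ Q *ᵥ Δ := by simpa using hQ.posSemidef.dotProduct_mulVec_nonneg Δ
  rcases hne with hΔ | hδ
  · have : 0 < Δ ⬝ᵥ Q *ᵥ Δ := by simpa using hQ.dotProduct_mulVec_pos hΔ
    positivity
  · have : 0 < δ ^ 2 := sq_pos_of_ne_zero hδ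
    positivity

theorem relaxedCost_lt_of_kkt {Q : Matrix ι ι ℝ} (hQ : Q.PosDef) {γ : ℝ} (hγ : 0 < γ)
    {c a : ι → ℝ} {β k lam : ℝ} (hlam : 0 ≤ lam) {v : ι → ℝ} {μ : ℝ}
    (hstat : Q *ᵥ v + c = lam • a) (hstatμ : γ * μ = lam * k)
    (hcompl : lam * (β + a ⬝ᵥ v + μ * k) = 0) {v' : ι → ℝ} {μ' : ℝ}
    (hfeas : 0 ≤ β + a ⬝ᵥ v' + μ' * k) (hne : (v', μ') ≠ (v, μ)) :
    relaxedCost Q c γ v μ < relaxedCost Q c γ v' μ' := by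
  obtain ⟨Δ, rfl⟩ : ∃ Δ, v' = v + Δ := ⟨v' - v, by abel⟩
  obtain ⟨δ, rfl⟩ : ∃ δ, μ' = μ + δ := ⟨μ' - μ, by ring⟩
  have hΔδ : Δ ≠ 0 ∨ δ ≠ 0 := by
    by_contra! h
    exact hne (by simp [h.1, h.2])
  have hlin : Δ ⬝ᵥ (Q *ᵥ v + c) + γ * μ * δ = lam * (β + a ⬝ᵥ (v + Δ) + (μ + δ) * k) := by
    rw [hstat, dotProduct_smul, smul_eq_mul, hstatμ, dotProduct_add, dotProduct_comm Δ a]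
    linear_combination -hcompl
  rw [relaxedCost_add hQ.isHermitian, hlin]
  have := hQ.dotProduct_mulVec_add_mul_sq_pos hγ hΔδ
  nlinarith [mul_nonneg hlam hfeas]

end RelaxedQP

section ClosedForm

variable {ι : Type*} [Fintype ι] [DecidableEq ι]

lemma mulVec_neg_inv_mulVec_add {Q : Matrix ι ι ℝ} (hQ : IsUnit Q) (c a : ι → ℝ) (lam : ℝ) :
    Q *ᵥ -(Q⁻¹ *ᵥ (c - lam • a)) + c = lam • a := by
  rw [mulVec_neg, mulVec_mulVec, mul_nonsing_inv _ ((isUnit_iff_isUnit_det Q).mp hQ),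
    one_mulVec]
  abel

lemma constraint_closedForm (Q : Matrix ι ι ℝ) (c a : ι → ℝ) (β k γ lam : ℝ) :
    β + a ⬝ᵥ -(Q⁻¹ *ᵥ (c - lam • a)) + k * lam / γ * k
      = β - a ⬝ᵥ Q⁻¹ *ᵥ c + lam * (a ⬝ᵥ Q⁻¹ *ᵥ a + γ⁻¹ * k ^ 2) := by
  rw [dotProduct_neg, mulVec_sub, mulVec_smul, dotProduct_sub, dotProduct_smul, smul_eq_mul]
  ring

end ClosedForm

lemma complementarity_of_eq_ite {ω d lam : ℝ} (hd : ω < 0 → 0 < d)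
    (hlam : lam = if ω < 0 then -ω / d else 0) :
    0 ≤ lam ∧ 0 ≤ ω + lam * d ∧ lam * (ω + lam * d) = 0 := by
  subst hlam
  split_ifs with hω
  · have hd := hd hω
    rw [div_mul_cancel₀ _ hd.ne', add_neg_cancel, mul_zero]
    exact ⟨div_nonneg (neg_nonneg.mpr hω.le) hd.le, le_rfl, rfl⟩
  · exact ⟨le_rfl, by simpa using not_lt.mp hω, by ring⟩

theorem closed_form_unique_minimizer_general {n m : ℕ}
    (h : (Fin n → ℝ) → ℝ)
    (f : (Fin n → ℝ) → Fin n → ℝ)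
    (g : (Fin n → ℝ) → Fin n → Fin m → ℝ)
    (Q : (Fin n → ℝ) → Matrix (Fin m) (Fin m) ℝ) (hQ : ∀ x, (Q x).PosDef)
    (c : (Fin n → ℝ) → Fin m → ℝ)
    (γ : ℝ) (hγ : 0 < γ)
    (α : ℝ → ℝ) (hα0 : α 0 = 0)
    (hB : ∀ x, h x = 0 → LieF h f x ≤ 0 → LieG h g x ≠ 0)
    (ω : (Fin n → ℝ) → ℝ)
    (hω : ∀ x, ω x = LieF h f x
      - (∑ i, LieG h g x i * Matrix.mulVec (Q x)⁻¹ (c x) i) + α (h x))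
    (d : (Fin n → ℝ) → ℝ)
    (hd : ∀ x, d x = (∑ i, LieG h g x i * Matrix.mulVec (Q x)⁻¹ (LieG h g x) i)
      + γ⁻¹ * (h x) ^ 2)
    (lam : (Fin n → ℝ) → ℝ)
    (hlam : ∀ x, lam x = if ω x < 0 then -ω x / d x else 0)
    (u : (Fin n → ℝ) → Fin m → ℝ)
    (hu : ∀ x, u x = -(Matrix.mulVec (Q x)⁻¹ (fun i => c x i - LieG h g x i * lam x)))
    (μ : (Fin n → ℝ) → ℝ) (hμ : ∀ x, μ x = h x * lam x / γ)
    (x : Fin n → ℝ) :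
    (0 ≤ LieF h f x + (∑ i, LieG h g x i * u x i) + α (h x) + μ x * h x) ∧
    ∀ (utilde : Fin m → ℝ) (μtilde : ℝ),
      0 ≤ LieF h f x + (∑ i, LieG h g x i * utilde i) + α (h x) + μtilde * h x →
      (utilde, μtilde) ≠ (u x, μ x) →
      (1 / 2) * (∑ i, u x i * Matrix.mulVec (Q x) (u x) i) + (∑ i, c x i * u x i)
          + (γ / 2) * (μ x) ^ 2
        < (1 / 2) * (∑ i, utilde i * Matrix.mulVec (Q x) utilde i)
          + (∑ i, c x i * utilde i) + (γ / 2) * μtilde ^ 2 := by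
  have hωx : ω x = LieF h f x - LieG h g x ⬝ᵥ (Q x)⁻¹ *ᵥ c x + α (h x) := hω x
  have hdx : d x = LieG h g x ⬝ᵥ (Q x)⁻¹ *ᵥ LieG h g x + γ⁻¹ * h x ^ 2 := hd x
  have hux : u x = -((Q x)⁻¹ *ᵥ (c x - lam x • LieG h g x)) := by
    rw [hu x]
    congr 2
    funext i
    simp only [Pi.sub_apply, Pi.smul_apply, smul_eq_mul, mul_comm]
  have hd_pos : ω x < 0 → 0 < d x := fun hω_neg => by
    rw [hdx]
    refine (hQ x).inv.dotProduct_mulVec_add_mul_sq_pos (inv_pos.mpr hγ) ?_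
    by_contra! hzero
    refine hB x hzero.2 ?_ hzero.1
    rw [hωx, hzero.1, hzero.2, hα0, zero_dotProduct] at hω_neg
    linarith
  obtain ⟨hlam_nonneg, hslack_nonneg, hcompl⟩ := complementarity_of_eq_ite hd_pos (hlam x)
  have hslack : LieF h f x + α (h x) + LieG h g x ⬝ᵥ u x + μ x * h x = ω x + lam x * d x := by
    rw [hux, hμ x, constraint_closedForm, hωx, hdx]
    ring
  refine ⟨by change 0 ≤ LieF h f x + LieG h g x ⬝ᵥ u x + α (h x) + μ x * h x; linarith,
    fun ut μt hfeas hne => ?_⟩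
  change 0 ≤ LieF h f x + LieG h g x ⬝ᵥ ut + α (h x) + μt * h x at hfeas
  refine relaxedCost_lt_of_kkt (hQ x) hγ hlam_nonneg (β := LieF h f x + α (h x)) ?_ ?_
    (by rwa [hslack]) (by linarith) hne
  · rw [hux]
    exact mulVec_neg_inv_mulVec_add (hQ x).isUnit _ _ _
  · rw [hμ x]
    field_simp

/-- Theorem 1(a): the closed-form pair `(u(x), μ(x))` is the unique global minimizer
of the quadratic cost `½ũᵀQ(x)ũ + c(x)ᵀũ + (γ/2)μ̃²` subject to the relaxed CBF
constraint. -/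
theorem closed_form_unique_minimizer {n m : ℕ}
    (h : (Fin n → ℝ) → ℝ) (hh : ContDiff ℝ 1 h)
    (f : (Fin n → ℝ) → Fin n → ℝ) (hf : Continuous f)
    (g : (Fin n → ℝ) → Fin n → Fin m → ℝ) (hg : Continuous g)
    (Q : (Fin n → ℝ) → Matrix (Fin m) (Fin m) ℝ) (hQ : ∀ x, (Q x).PosDef)
    (hQc : ∀ i j, Continuous fun x => Q x i j)
    (c : (Fin n → ℝ) → Fin m → ℝ) (hc : Continuous c)
    (γ : ℝ) (hγ : 0 < γ)
    (α : ℝ → ℝ) (hα0 : α 0 = 0) (hαmono : Monotone α)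
    (hB : ∀ x, h x = 0 → LieF h f x ≤ 0 → LieG h g x ≠ 0)
    (ω : (Fin n → ℝ) → ℝ)
    (hω : ∀ x, ω x = LieF h f x
      - (∑ i, LieG h g x i * Matrix.mulVec (Q x)⁻¹ (c x) i) + α (h x))
    (d : (Fin n → ℝ) → ℝ)
    (hd : ∀ x, d x = (∑ i, LieG h g x i * Matrix.mulVec (Q x)⁻¹ (LieG h g x) i)
      + γ⁻¹ * (h x) ^ 2)
    (lam : (Fin n → ℝ) → ℝ)
    (hlam : ∀ x, lam x = if ω x < 0 then -ω x / d x else 0)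
    (u : (Fin n → ℝ) → Fin m → ℝ)
    (hu : ∀ x, u x = -(Matrix.mulVec (Q x)⁻¹ (fun i => c x i - LieG h g x i * lam x)))
    (μ : (Fin n → ℝ) → ℝ) (hμ : ∀ x, μ x = h x * lam x / γ)
    (x : Fin n → ℝ) :
    (0 ≤ LieF h f x + (∑ i, LieG h g x i * u x i) + α (h x) + μ x * h x) ∧
    ∀ (utilde : Fin m → ℝ) (μtilde : ℝ),
      0 ≤ LieF h f x + (∑ i, LieG h g x i * utilde i) + α (h x) + μtilde * h x →
      (utilde, μtilde) ≠ (u x, μ x) →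
      (1 / 2) * (∑ i, u x i * Matrix.mulVec (Q x) (u x) i) + (∑ i, c x i * u x i)
          + (γ / 2) * (μ x) ^ 2
        < (1 / 2) * (∑ i, utilde i * Matrix.mulVec (Q x) utilde i)
          + (∑ i, c x i * utilde i) + (γ / 2) * μtilde ^ 2 :=
  closed_form_unique_minimizer_general h f g Q hQ c γ hγ α hα0 hB ω hω d hd lam hlam u hu μ hμ x
end

section
/- Consider the QP setting with α continuous, and assume that for all x ∈ B, L_g h(x) ≠ 0. Define λ(x) = −ω(x)/d(x) if x ∈ Ω and λ(x) = 0 otherwise, u(x) = −Q(x)^{-1}(c(x) − L_g h(x)^T λ(x)), and μ(x) = h(x) λ(x)/γ. Then λ, u, and μ are continuous on ℝ^n. -/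
/-!
The only points where `λ = ω⁻ / d` could fail to be continuous are the zeros of `d`. Since `Q⁻¹`
is positive definite, `d x = 0` forces `L_g h(x) = 0` and `h(x) = 0`; the hypothesis on `B` and
`α 0 = 0` then give `ω x = L_f h(x) > 0`, so `λ` vanishes on a neighbourhood of `x`. Continuity
of `u` and `μ` follows from that of `λ` and of `x ↦ Q(x)⁻¹`.
-/

open Matrix

theorem Continuous.matrix_inv {X K ι : Type*} [TopologicalSpace X] [Fintype ι] [DecidableEq ι]
    [Field K] [TopologicalSpace K] [IsTopologicalDivisionRing K]
    {A : X → Matrix ι ι K} (hA : Continuous A) (hdet : ∀ x, (A x).det ≠ 0) :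
    Continuous fun x => (A x)⁻¹ :=
  continuous_iff_continuousAt.2 fun x =>
    (continuousAt_matrix_inv _
      (by rw [Ring.inverse_eq_inv']; exact continuousAt_inv₀ (hdet x))).comp hA.continuousAt

theorem Matrix.PosDef.eq_zero_of_dotProduct_mulVec_add_mul_sq_eq_zero {ι : Type*} [Fintype ι]
    {A : Matrix ι ι ℝ} (hA : A.PosDef) {v : ι → ℝ} {a t : ℝ} (ha : 0 < a)
    (h : v ⬝ᵥ A *ᵥ v + a * t ^ 2 = 0) : v = 0 ∧ t = 0 := by
  have hquad : 0 ≤ v ⬝ᵥ A *ᵥ v := hA.posSemidef.dotProduct_mulVec_nonneg v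
  have hsq : 0 ≤ a * t ^ 2 := by positivity
  refine ⟨by_contra fun hv => ?_, ?_⟩
  · have hpos := hA.dotProduct_mulVec_pos hv
    rw [star_trivial] at hpos
    linarith
  · simpa [ha.ne'] using (show a * t ^ 2 = 0 by linarith)

theorem Continuous.negPart_div {X : Type*} [TopologicalSpace X] {p q : X → ℝ}
    (hp : Continuous p) (hq : Continuous q) (h : ∀ x, q x = 0 → 0 < p x) :
    Continuous fun x => (p x)⁻ / q x := by
  refine continuous_iff_continuousAt.2 fun x => ?_
  by_cases hx : q x = 0
  · refine (continuousAt_const (y := (0 : ℝ))).congr ?_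
    filter_upwards [hp.continuousAt.eventually (lt_mem_nhds (h x hx))] with y hy
    rw [negPart_of_nonneg hy.le, zero_div]
  · exact (hp.neg.max continuous_const).continuousAt.div hq.continuousAt hx

theorem ite_neg_div_eq_negPart_div (a b : ℝ) :
    (if a < 0 then -a / b else 0) = a⁻ / b := by
  split_ifs with ha
  · rw [negPart_of_nonpos ha.le]
  · rw [negPart_of_nonneg (not_lt.1 ha), zero_div]

section LieDerivative

variable {n m : ℕ} {h : (Fin n → ℝ) → ℝ}

theorem continuous_lieF (hh : ContDiff ℝ 1 h) {f : (Fin n → ℝ) → Fin n → ℝ}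
    (hf : Continuous f) : Continuous (LieF h f) :=
  (hh.continuous_fderiv one_ne_zero).clm_apply hf

theorem continuous_lieG (hh : ContDiff ℝ 1 h) {g : (Fin n → ℝ) → Fin n → Fin m → ℝ}
    (hg : Continuous g) : Continuous (LieG h g) :=
  continuous_pi fun _ => (hh.continuous_fderiv one_ne_zero).clm_apply (by fun_prop)

end LieDerivative

theorem closed_form_continuous_general {n m : ℕ}
    (h : (Fin n → ℝ) → ℝ) (hh : ContDiff ℝ 1 h)
    (f : (Fin n → ℝ) → Fin n → ℝ) (hf : Continuous f)
    (g : (Fin n → ℝ) → Fin n → Fin m → ℝ) (hg : Continuous g)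
    (Q : (Fin n → ℝ) → Matrix (Fin m) (Fin m) ℝ) (hQ : ∀ x, (Q x).PosDef)
    (hQc : ∀ i j, Continuous fun x => Q x i j)
    (c : (Fin n → ℝ) → Fin m → ℝ) (hc : Continuous c)
    (γ : ℝ) (hγ : 0 < γ)
    (α : ℝ → ℝ) (hα0 : α 0 = 0) (hαcont : Continuous α)
    (hB : ∀ x, h x = 0 → LieF h f x ≤ 0 → LieG h g x ≠ 0)
    (ω : (Fin n → ℝ) → ℝ)
    (hω : ∀ x, ω x = LieF h f x
      - (∑ i, LieG h g x i * Matrix.mulVec (Q x)⁻¹ (c x) i) + α (h x))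
    (d : (Fin n → ℝ) → ℝ)
    (hd : ∀ x, d x = (∑ i, LieG h g x i * Matrix.mulVec (Q x)⁻¹ (LieG h g x) i)
      + γ⁻¹ * (h x) ^ 2)
    (lam : (Fin n → ℝ) → ℝ)
    (hlam : ∀ x, lam x = if ω x < 0 then -ω x / d x else 0)
    (u : (Fin n → ℝ) → Fin m → ℝ)
    (hu : ∀ x, u x = -(Matrix.mulVec (Q x)⁻¹ (fun i => c x i - LieG h g x i * lam x)))
    (μ : (Fin n → ℝ) → ℝ) (hμ : ∀ x, μ x = h x * lam x / γ) :
    Continuous lam ∧ Continuous u ∧ Continuous μ := by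
  have hLF := continuous_lieF hh hf
  have hLG := continuous_lieG hh hg
  have hQinv : Continuous fun x => (Q x)⁻¹ :=
    (continuous_matrix fun i j => hQc i j).matrix_inv fun x => (hQ x).det_pos.ne'
  have hωc : Continuous ω := by
    rw [funext hω]
    exact (hLF.sub (hLG.dotProduct (hQinv.matrix_mulVec hc))).add (hαcont.comp hh.continuous)
  have hdc : Continuous d := by
    rw [funext hd]
    exact (hLG.dotProduct (hQinv.matrix_mulVec hLG)).add (by fun_prop)
  have hω_pos : ∀ x, d x = 0 → 0 < ω x := by
    intro x hx
    obtain ⟨hv, hhx⟩ := (hQ x).inv.eq_zero_of_dotProduct_mulVec_add_mul_sq_eq_zero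
      (inv_pos.2 hγ) ((hd x).symm.trans hx)
    have hωx : ω x = LieF h f x := by simp [hω x, hv, hhx, hα0]
    exact hωx ▸ lt_of_not_ge fun hle => hB x hhx hle hv
  have hlamc : Continuous lam := by
    simpa only [funext hlam, ite_neg_div_eq_negPart_div] using hωc.negPart_div hdc hω_pos
  refine ⟨hlamc, ?_, ?_⟩
  · rw [funext hu]
    exact (hQinv.matrix_mulVec (by fun_prop)).neg
  · rw [funext hμ]
    exact (hh.continuous.mul hlamc).div_const γ

/-- Theorem 1(c): `λ`, `u`, and `μ` are continuous on `ℝⁿ`. -/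
theorem closed_form_continuous {n m : ℕ}
    (h : (Fin n → ℝ) → ℝ) (hh : ContDiff ℝ 1 h)
    (f : (Fin n → ℝ) → Fin n → ℝ) (hf : Continuous f)
    (g : (Fin n → ℝ) → Fin n → Fin m → ℝ) (hg : Continuous g)
    (Q : (Fin n → ℝ) → Matrix (Fin m) (Fin m) ℝ) (hQ : ∀ x, (Q x).PosDef)
    (hQc : ∀ i j, Continuous fun x => Q x i j)
    (c : (Fin n → ℝ) → Fin m → ℝ) (hc : Continuous c)
    (γ : ℝ) (hγ : 0 < γ)
    (α : ℝ → ℝ) (hα0 : α 0 = 0) (hαmono : Monotone α) (hαcont : Continuous α)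
    (hB : ∀ x, h x = 0 → LieF h f x ≤ 0 → LieG h g x ≠ 0)
    (ω : (Fin n → ℝ) → ℝ)
    (hω : ∀ x, ω x = LieF h f x
      - (∑ i, LieG h g x i * Matrix.mulVec (Q x)⁻¹ (c x) i) + α (h x))
    (d : (Fin n → ℝ) → ℝ)
    (hd : ∀ x, d x = (∑ i, LieG h g x i * Matrix.mulVec (Q x)⁻¹ (LieG h g x) i)
      + γ⁻¹ * (h x) ^ 2)
    (lam : (Fin n → ℝ) → ℝ)
    (hlam : ∀ x, lam x = if ω x < 0 then -ω x / d x else 0)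
    (u : (Fin n → ℝ) → Fin m → ℝ)
    (hu : ∀ x, u x = -(Matrix.mulVec (Q x)⁻¹ (fun i => c x i - LieG h g x i * lam x)))
    (μ : (Fin n → ℝ) → ℝ) (hμ : ∀ x, μ x = h x * lam x / γ) :
    Continuous lam ∧ Continuous u ∧ Continuous μ :=
  closed_form_continuous_general h hh f hf g hg Q hQ hQc c hc γ hγ α hα0 hαcont hB ω hω d hd lam
    hlam u hu μ hμ
end

section
/- Consider the QP setting, and additionally assume that f, g, Q^{-1}, c, α, and h are locally Lipschitz on ℝ^n, that for all x ∈ B, L_g h(x) ≠ 0, and that h′ is locally Lipschitz on a set D ⊆ ℝ^n. Define λ(x) = −ω(x)/d(x) if x ∈ Ω and λ(x) = 0 otherwise, u(x) = −Q(x)^{-1}(c(x) − L_g h(x)^T λ(x)), and μ(x) = h(x) λ(x)/γ. Then λ, u, and μ are locally Lipschitz on D. -/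
/-!
The data `ω`, `d` are assembled from locally Lipschitz functions by sums, products and
evaluation of `h′`, which is locally Lipschitz on `D`; hence they are locally Lipschitz on `D`,
and so are `u` and `μ` once `λ` is. For `λ`, write `λ = max (-ω) 0 / d`. Near a point where
`ω > 0` the numerator vanishes identically, and where `ω ≤ 0` the denominator is positive:
since `Q⁻¹` is positive definite, `d = 0` forces `L_g h = 0` and `h = 0`, and then
`ω = L_f h ≤ 0` puts the point in `B`, where `L_g h ≠ 0`.
-/

open Set Filter Topology Matrix

section PseudoEMetric

variable {X Y Z : Type*} [PseudoEMetricSpace X] [PseudoEMetricSpace Y] [PseudoEMetricSpace Z]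
  {s : Set X}

theorem LocallyLipschitzOn.congr {f g : X → Y} (hf : LocallyLipschitzOn s f)
    (hfg : EqOn f g s) : LocallyLipschitzOn s g := fun x hx => by
  obtain ⟨K, t, ht, hK⟩ := hf hx
  refine ⟨K, t ∩ s, inter_mem ht self_mem_nhdsWithin, fun y hy z hz => ?_⟩
  rw [← hfg hy.2, ← hfg hz.2]
  exact hK hy.1 hz.1

theorem locallyLipschitzOn_of_locally_locallyLipschitzOn {f : X → Y}
    (h : ∀ x ∈ s, ∃ t ∈ 𝓝[s] x, LocallyLipschitzOn t f) : LocallyLipschitzOn s f := fun x hx => by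
  obtain ⟨t, ht, hf⟩ := h x hx
  obtain ⟨K, u, hu, hK⟩ := hf (mem_of_mem_nhdsWithin hx ht)
  exact ⟨K, u, nhdsWithin_le_of_mem ht hu, hK⟩

theorem LocallyLipschitzOn.comp {g : Y → Z} {f : X → Y} {t : Set Y}
    (hg : LocallyLipschitzOn t g) (hf : LocallyLipschitzOn s f) (hst : MapsTo f s t) :
    LocallyLipschitzOn s fun x => g (f x) := fun x hx => by
  obtain ⟨Kg, u, hu, hKg⟩ := hg (hst hx)
  obtain ⟨Kf, v, hv, hKf⟩ := hf hx
  have hfu : f ⁻¹' u ∈ 𝓝[s] x := (hf.continuousOn x hx).tendsto_nhdsWithin hst hu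
  exact ⟨Kg * Kf, v ∩ f ⁻¹' u, inter_mem hv hfu,
    hKg.comp (hKf.mono inter_subset_left) fun _ hy => hy.2⟩

theorem LocallyLipschitz.comp_locallyLipschitzOn {g : Y → Z} {f : X → Y}
    (hg : LocallyLipschitz g) (hf : LocallyLipschitzOn s f) :
    LocallyLipschitzOn s fun x => g (f x) :=
  hg.locallyLipschitzOn.comp hf (mapsTo_univ _ _)

theorem LocallyLipschitzOn.prodMk {f : X → Y} {g : X → Z} (hf : LocallyLipschitzOn s f)
    (hg : LocallyLipschitzOn s g) : LocallyLipschitzOn s fun x => (f x, g x) := fun x hx => by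
  obtain ⟨Kf, t, ht, hKf⟩ := hf hx
  obtain ⟨Kg, u, hu, hKg⟩ := hg hx
  exact ⟨max Kf Kg, t ∩ u, inter_mem ht hu,
    (hKf.mono inter_subset_left).prodMk (hKg.mono inter_subset_right)⟩

theorem locallyLipschitzOn_pi {ι : Type*} [Fintype ι] {π : ι → Type*}
    [∀ i, PseudoEMetricSpace (π i)] {f : X → ∀ i, π i} :
    LocallyLipschitzOn s f ↔ ∀ i, LocallyLipschitzOn s fun x => f x i := by
  refine ⟨fun hf i => (LipschitzWith.eval i).locallyLipschitz.comp_locallyLipschitzOn hf,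
    fun h x hx => ?_⟩
  choose K t ht hK using fun i => h i hx
  refine ⟨Finset.univ.sup K, ⋂ i, t i, iInter_mem.2 ht, fun y hy z hz =>
    edist_pi_le_iff.2 fun i => (hK i (mem_iInter.1 hy i) (mem_iInter.1 hz i)).trans ?_⟩
  gcongr
  exact Finset.le_sup (Finset.mem_univ i)

theorem LocallyLipschitzOn.sum {ι E : Type*} [SeminormedAddCommGroup E] (u : Finset ι)
    {f : ι → X → E} (hf : ∀ i ∈ u, LocallyLipschitzOn s (f i)) :
    LocallyLipschitzOn s fun x => ∑ i ∈ u, f i x := by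
  classical
  induction u using Finset.induction with
  | empty => simpa using (LocallyLipschitz.const (0 : E)).locallyLipschitzOn
  | insert i u hi ih =>
    simp only [Finset.sum_insert hi]
    exact (hf i (Finset.mem_insert_self i u)).add
      (ih fun j hj => hf j (Finset.mem_insert_of_mem hj))

end PseudoEMetric

section Normed

variable {X E F 𝔸 : Type*} [PseudoEMetricSpace X] [NormedAddCommGroup E] [NormedSpace ℝ E]
  [NormedAddCommGroup F] [NormedSpace ℝ F] [NormedRing 𝔸] [NormedAlgebra ℝ 𝔸] {s : Set X}

theorem LocallyLipschitzOn.clm_apply {A : X → E →L[ℝ] F} {v : X → E}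
    (hA : LocallyLipschitzOn s A) (hv : LocallyLipschitzOn s v) :
    LocallyLipschitzOn s fun x => A x (v x) :=
  (isBoundedBilinearMap_apply.contDiff.locallyLipschitz).comp_locallyLipschitzOn (hA.prodMk hv)

theorem LocallyLipschitzOn.mul' {f g : X → 𝔸} (hf : LocallyLipschitzOn s f)
    (hg : LocallyLipschitzOn s g) : LocallyLipschitzOn s fun x => f x * g x :=
  ((contDiff_mul (𝕜 := ℝ)).locallyLipschitz).comp_locallyLipschitzOn (hf.prodMk hg)

theorem LocallyLipschitzOn.dotProduct {ι : Type*} [Fintype ι] {v w : X → ι → 𝔸}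
    (hv : LocallyLipschitzOn s v) (hw : LocallyLipschitzOn s w) :
    LocallyLipschitzOn s fun x => v x ⬝ᵥ w x :=
  .sum _ fun i _ => (locallyLipschitzOn_pi.1 hv i).mul' (locallyLipschitzOn_pi.1 hw i)

theorem LocallyLipschitzOn.matrix_mulVec {ι κ : Type*} [Fintype ι] [Fintype κ]
    {M : X → Matrix ι κ 𝔸} {v : X → κ → 𝔸} (hM : ∀ i j, LocallyLipschitzOn s fun x => M x i j)
    (hv : LocallyLipschitzOn s v) : LocallyLipschitzOn s fun x => M x *ᵥ v x :=
  locallyLipschitzOn_pi.2 fun i => (locallyLipschitzOn_pi.2 (hM i)).dotProduct hv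

theorem locallyLipschitzOn_inv₀ {𝕜 : Type*} [RCLike 𝕜] :
    LocallyLipschitzOn {0}ᶜ fun z : 𝕜 => z⁻¹ := fun _ hz => by
  obtain ⟨K, t, ht, hK⟩ := (contDiffAt_inv 𝕜 hz).exists_lipschitzOnWith
  exact ⟨K, t, mem_nhdsWithin_of_mem_nhds ht, hK⟩

theorem LocallyLipschitzOn.div₀ {𝕜 : Type*} [RCLike 𝕜] {f g : X → 𝕜}
    (hf : LocallyLipschitzOn s f) (hg : LocallyLipschitzOn s g)
    (h : ∀ x ∈ s, g x ≠ 0 ∨ f =ᶠ[𝓝[s] x] 0) : LocallyLipschitzOn s fun x => f x / g x := by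
  refine locallyLipschitzOn_of_locally_locallyLipschitzOn fun x hx => ?_
  rcases h x hx with hgx | hfx
  · refine ⟨s ∩ g ⁻¹' {0}ᶜ, inter_mem self_mem_nhdsWithin
      ((hg.continuousOn x hx).preimage_mem_nhdsWithin (isOpen_compl_singleton.mem_nhds hgx)), ?_⟩
    have hinv : LocallyLipschitzOn (s ∩ g ⁻¹' {0}ᶜ) fun y => (g y)⁻¹ :=
      locallyLipschitzOn_inv₀.comp (hg.mono inter_subset_left) fun _ hy => hy.2
    simpa only [div_eq_mul_inv] using (hf.mono inter_subset_left).mul' hinv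
  · refine ⟨_, hfx, (LocallyLipschitz.const 0).locallyLipschitzOn.congr fun y hy => ?_⟩
    simp [show f y = 0 from hy]

theorem LocallyLipschitzOn.ite_neg_div {ω d : X → ℝ} (hω : LocallyLipschitzOn s ω)
    (hd : LocallyLipschitzOn s d) (hd₀ : ∀ x ∈ s, ω x ≤ 0 → d x ≠ 0) :
    LocallyLipschitzOn s fun x => if ω x < 0 then -ω x / d x else 0 := by
  have hmax : LocallyLipschitzOn s fun x => max (-ω x) 0 :=
    (LipschitzWith.id.max_const 0).locallyLipschitz.comp_locallyLipschitzOn hω.neg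
  refine (hmax.div₀ hd fun x hx => ?_).congr fun x _ => ?_
  · by_cases hωx : ω x ≤ 0
    · exact .inl (hd₀ x hx hωx)
    · refine .inr ?_
      filter_upwards [(hω.continuousOn x hx).eventually (lt_mem_nhds (not_le.1 hωx))] with y hy
      simpa using hy.le
  · dsimp only
    split_ifs with hωx
    · rw [max_eq_left (neg_nonneg.2 hωx.le)]
    · rw [max_eq_right (neg_nonpos.2 (not_lt.1 hωx)), zero_div]

end Normed

theorem Matrix.PosDef.dotProduct_inv_mulVec_add_mul_sq_pos {ι : Type*} [Fintype ι]
    [DecidableEq ι] {Q : Matrix ι ι ℝ} (hQ : Q.PosDef) {a : ℝ} (ha : 0 < a) {v : ι → ℝ} {r : ℝ}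
    (hvr : v ≠ 0 ∨ r ≠ 0) : 0 < v ⬝ᵥ (Q⁻¹ *ᵥ v) + a * r ^ 2 := by
  rcases hvr with hv | hr
  · have := hQ.inv.dotProduct_mulVec_pos hv
    rw [star_trivial] at this
    positivity
  · have := hQ.inv.posSemidef.dotProduct_mulVec_nonneg v
    rw [star_trivial] at this
    positivity

theorem LocallyLipschitzOn.lieF {n : ℕ} {h : (Fin n → ℝ) → ℝ} {f : (Fin n → ℝ) → Fin n → ℝ}
    {D : Set (Fin n → ℝ)} (hh : LocallyLipschitzOn D (fderiv ℝ h))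
    (hf : LocallyLipschitzOn D f) : LocallyLipschitzOn D (LieF h f) :=
  hh.clm_apply hf

theorem LocallyLipschitzOn.lieG {n m : ℕ} {h : (Fin n → ℝ) → ℝ}
    {g : (Fin n → ℝ) → Fin n → Fin m → ℝ} {D : Set (Fin n → ℝ)}
    (hh : LocallyLipschitzOn D (fderiv ℝ h)) (hg : LocallyLipschitzOn D g) :
    LocallyLipschitzOn D (LieG h g) :=
  locallyLipschitzOn_pi.2 fun i => hh.clm_apply <|
    locallyLipschitzOn_pi.2 fun k => locallyLipschitzOn_pi.1 (locallyLipschitzOn_pi.1 hg k) i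

theorem closed_form_locallyLipschitzOn_general {n m : ℕ}
    (h : (Fin n → ℝ) → ℝ) (hhl : LocallyLipschitz h)
    (f : (Fin n → ℝ) → Fin n → ℝ) (hfl : LocallyLipschitz f)
    (g : (Fin n → ℝ) → Fin n → Fin m → ℝ) (hgl : LocallyLipschitz g)
    (Q : (Fin n → ℝ) → Matrix (Fin m) (Fin m) ℝ) (hQ : ∀ x, (Q x).PosDef)
    (hQinvl : ∀ i j, LocallyLipschitz fun x => (Q x)⁻¹ i j)
    (c : (Fin n → ℝ) → Fin m → ℝ) (hcl : LocallyLipschitz c)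
    (γ : ℝ) (hγ : 0 < γ)
    (α : ℝ → ℝ) (hα0 : α 0 = 0) (hαl : LocallyLipschitz α)
    (hB : ∀ x, h x = 0 → LieF h f x ≤ 0 → LieG h g x ≠ 0)
    (D : Set (Fin n → ℝ)) (hD : LocallyLipschitzOn D (fderiv ℝ h))
    (ω : (Fin n → ℝ) → ℝ)
    (hω : ∀ x, ω x = LieF h f x
      - (∑ i, LieG h g x i * Matrix.mulVec (Q x)⁻¹ (c x) i) + α (h x))
    (d : (Fin n → ℝ) → ℝ)
    (hd : ∀ x, d x = (∑ i, LieG h g x i * Matrix.mulVec (Q x)⁻¹ (LieG h g x) i)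
      + γ⁻¹ * (h x) ^ 2)
    (lam : (Fin n → ℝ) → ℝ)
    (hlam : ∀ x, lam x = if ω x < 0 then -ω x / d x else 0)
    (u : (Fin n → ℝ) → Fin m → ℝ)
    (hu : ∀ x, u x = -(Matrix.mulVec (Q x)⁻¹ (fun i => c x i - LieG h g x i * lam x)))
    (μ : (Fin n → ℝ) → ℝ) (hμ : ∀ x, μ x = h x * lam x / γ) :
    LocallyLipschitzOn D lam ∧ LocallyLipschitzOn D u ∧ LocallyLipschitzOn D μ := by
  have hhD : LocallyLipschitzOn D h := hhl.locallyLipschitzOn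
  have hQinv (i j) : LocallyLipschitzOn D fun x => (Q x)⁻¹ i j := (hQinvl i j).locallyLipschitzOn
  have hLieG : LocallyLipschitzOn D (LieG h g) := hD.lieG hgl.locallyLipschitzOn
  have hωD : LocallyLipschitzOn D ω := by
    rw [funext hω]
    exact ((hD.lieF hfl.locallyLipschitzOn).sub
      (hLieG.dotProduct (.matrix_mulVec hQinv hcl.locallyLipschitzOn))).add
      (hαl.comp hhl).locallyLipschitzOn
  have hdD : LocallyLipschitzOn D d := by
    rw [funext hd]
    exact (hLieG.dotProduct (.matrix_mulVec hQinv hLieG)).add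
      ((LocallyLipschitz.const γ⁻¹).locallyLipschitzOn.mul' (by simpa only [sq] using hhD.mul' hhD))
  have hd_pos (x) (hωx : ω x ≤ 0) : 0 < d x := by
    rw [hd x]
    refine (hQ x).dotProduct_inv_mulVec_add_mul_sq_pos (inv_pos.2 hγ) ?_
    by_contra! hzero
    obtain ⟨hG, hh0⟩ := hzero
    refine hB x hh0 ?_ hG
    simpa [hω, hG, hh0, hα0] using hωx
  have hlamD : LocallyLipschitzOn D lam := by
    rw [funext hlam]
    exact hωD.ite_neg_div hdD fun x _ hωx => (hd_pos x hωx).ne'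
  refine ⟨hlamD, ?_, ?_⟩
  · rw [funext hu]
    exact (LocallyLipschitzOn.matrix_mulVec hQinv (locallyLipschitzOn_pi.2 fun i =>
      (locallyLipschitzOn_pi.1 hcl.locallyLipschitzOn i).sub
        ((locallyLipschitzOn_pi.1 hLieG i).mul' hlamD))).neg
  · rw [funext hμ]
    exact (hhD.mul' hlamD).div₀ (LocallyLipschitz.const γ).locallyLipschitzOn
      fun _ _ => .inl hγ.ne'

/-- Theorem 1(d): if `f`, `g`, `Q⁻¹`, `c`, `α`, and `h` are locally Lipschitz and
`h′` is locally Lipschitz on `D`, then `λ`, `u`, and `μ` are locally Lipschitz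
on `D`. -/
theorem closed_form_locallyLipschitzOn {n m : ℕ}
    (h : (Fin n → ℝ) → ℝ) (hh : ContDiff ℝ 1 h) (hhl : LocallyLipschitz h)
    (f : (Fin n → ℝ) → Fin n → ℝ) (hf : Continuous f) (hfl : LocallyLipschitz f)
    (g : (Fin n → ℝ) → Fin n → Fin m → ℝ) (hg : Continuous g) (hgl : LocallyLipschitz g)
    (Q : (Fin n → ℝ) → Matrix (Fin m) (Fin m) ℝ) (hQ : ∀ x, (Q x).PosDef)
    (hQc : ∀ i j, Continuous fun x => Q x i j)
    (hQinvl : ∀ i j, LocallyLipschitz fun x => (Q x)⁻¹ i j)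
    (c : (Fin n → ℝ) → Fin m → ℝ) (hc : Continuous c) (hcl : LocallyLipschitz c)
    (γ : ℝ) (hγ : 0 < γ)
    (α : ℝ → ℝ) (hα0 : α 0 = 0) (hαmono : Monotone α) (hαl : LocallyLipschitz α)
    (hB : ∀ x, h x = 0 → LieF h f x ≤ 0 → LieG h g x ≠ 0)
    (D : Set (Fin n → ℝ)) (hD : LocallyLipschitzOn D (fderiv ℝ h))
    (ω : (Fin n → ℝ) → ℝ)
    (hω : ∀ x, ω x = LieF h f x
      - (∑ i, LieG h g x i * Matrix.mulVec (Q x)⁻¹ (c x) i) + α (h x))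
    (d : (Fin n → ℝ) → ℝ)
    (hd : ∀ x, d x = (∑ i, LieG h g x i * Matrix.mulVec (Q x)⁻¹ (LieG h g x) i)
      + γ⁻¹ * (h x) ^ 2)
    (lam : (Fin n → ℝ) → ℝ)
    (hlam : ∀ x, lam x = if ω x < 0 then -ω x / d x else 0)
    (u : (Fin n → ℝ) → Fin m → ℝ)
    (hu : ∀ x, u x = -(Matrix.mulVec (Q x)⁻¹ (fun i => c x i - LieG h g x i * lam x)))
    (μ : (Fin n → ℝ) → ℝ) (hμ : ∀ x, μ x = h x * lam x / γ) :
    LocallyLipschitzOn D lam ∧ LocallyLipschitzOn D u ∧ LocallyLipschitzOn D μ :=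
  closed_form_locallyLipschitzOn_general h hhl f hfl g hgl Q hQ hQinvl c hcl γ hγ α hα0 hαl hB D hD
    ω hω d hd lam hlam u hu μ hμ
end

section
/- Consider the QP setting, and assume that for all x ∈ B, L_g h(x) ≠ 0. Define λ(x) = −ω(x)/d(x) if x ∈ Ω and λ(x) = 0 otherwise, and u(x) = −Q(x)^{-1}(c(x) − L_g h(x)^T λ(x)). Then for every x ∈ ℝ^n with h(x) = 0, L_f h(x) + L_g h(x) u(x) ≥ 0; more precisely, L_f h(x) + L_g h(x) u(x) = 0 if x ∈ Ω and L_f h(x) + L_g h(x) u(x) = ω(x) ≥ 0 if x ∉ Ω. -/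
/-!
On `h = 0` the term `α (h x)` vanishes and `d x = L_g h Q⁻¹ L_g hᵀ`, so expanding the control gives
`L_f h + L_g h u = ω + λ d`. Off `Ω` we have `λ = 0`, leaving `ω ≥ 0`. On `Ω`, `L_g h ≠ 0`
(otherwise `ω = L_f h < 0` and the point lies in `B`), so `d > 0` because `Q⁻¹` is positive
definite, and `λ d = -ω` cancels `ω`.
-/

open Matrix

theorem dotProduct_neg_mulVec_sub_smul {m : Type*} [Fintype m] {R : Type*} [CommRing R]
    (M : Matrix m m R) (v c : m → R) (t : R) :
    v ⬝ᵥ -(M *ᵥ (c - t • v)) = t * (v ⬝ᵥ M *ᵥ v) - v ⬝ᵥ M *ᵥ c := by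
  rw [mulVec_sub, mulVec_smul, dotProduct_neg, dotProduct_sub, dotProduct_smul, smul_eq_mul]
  ring

theorem Matrix.PosDef.dotProduct_mulVec_pos_real {m : Type*} [Fintype m]
    {M : Matrix m m ℝ} (hM : M.PosDef) {v : m → ℝ} (hv : v ≠ 0) : 0 < v ⬝ᵥ M *ᵥ v := by
  simpa using hM.dotProduct_mulVec_pos hv

theorem closed_form_boundary_inequality_general {n m : ℕ}
    (h : (Fin n → ℝ) → ℝ)
    (f : (Fin n → ℝ) → Fin n → ℝ)
    (g : (Fin n → ℝ) → Fin n → Fin m → ℝ)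
    (Q : (Fin n → ℝ) → Matrix (Fin m) (Fin m) ℝ) (hQ : ∀ x, (Q x).PosDef)
    (c : (Fin n → ℝ) → Fin m → ℝ)
    (γ : ℝ)
    (α : ℝ → ℝ) (hα0 : α 0 = 0)
    (hB : ∀ x, h x = 0 → LieF h f x ≤ 0 → LieG h g x ≠ 0)
    (ω : (Fin n → ℝ) → ℝ)
    (hω : ∀ x, ω x = LieF h f x
      - (∑ i, LieG h g x i * Matrix.mulVec (Q x)⁻¹ (c x) i) + α (h x))
    (d : (Fin n → ℝ) → ℝ)
    (hd : ∀ x, d x = (∑ i, LieG h g x i * Matrix.mulVec (Q x)⁻¹ (LieG h g x) i)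
      + γ⁻¹ * (h x) ^ 2)
    (lam : (Fin n → ℝ) → ℝ)
    (hlam : ∀ x, lam x = if ω x < 0 then -ω x / d x else 0)
    (u : (Fin n → ℝ) → Fin m → ℝ)
    (hu : ∀ x, u x = -(Matrix.mulVec (Q x)⁻¹ (fun i => c x i - LieG h g x i * lam x))) :
    ∀ x : Fin n → ℝ, h x = 0 →
      (0 ≤ LieF h f x + ∑ i, LieG h g x i * u x i) ∧
      (ω x < 0 → LieF h f x + ∑ i, LieG h g x i * u x i = 0) ∧
      (¬ ω x < 0 →
        LieF h f x + ∑ i, LieG h g x i * u x i = ω x ∧ 0 ≤ ω x) := by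
  intro x hx
  set v := LieG h g x
  have hωx : ω x = LieF h f x - v ⬝ᵥ (Q x)⁻¹ *ᵥ c x := by
    rw [hω, hx, hα0, add_zero]; rfl
  have hdx : d x = v ⬝ᵥ (Q x)⁻¹ *ᵥ v := by
    rw [hd, hx, zero_pow two_ne_zero, mul_zero, add_zero]; rfl
  have hcontrol : LieF h f x + v ⬝ᵥ u x = ω x + lam x * d x := by
    have : (fun i => c x i - v i * lam x) = c x - lam x • v := by
      ext i; simp [mul_comm]
    rw [hu, this, dotProduct_neg_mulVec_sub_smul, hωx, hdx]
    ring
  change LieF h f x + v ⬝ᵥ u x ≥ 0 ∧ (ω x < 0 → LieF h f x + v ⬝ᵥ u x = 0) ∧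
    (¬ ω x < 0 → LieF h f x + v ⬝ᵥ u x = ω x ∧ 0 ≤ ω x)
  rw [hcontrol]
  by_cases hΩ : ω x < 0
  · have hv : v ≠ 0 := fun hv0 => hB x hx (by simp [hv0] at hωx; linarith) hv0
    have hdpos : 0 < d x := hdx ▸ (hQ x).inv.dotProduct_mulVec_pos_real hv
    have hcancel : ω x + lam x * d x = 0 := by
      rw [hlam, if_pos hΩ, div_mul_cancel₀ _ hdpos.ne']; ring
    exact ⟨hcancel.ge, fun _ => hcancel, absurd hΩ⟩
  · have hω0 : 0 ≤ ω x := not_lt.mp hΩ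
    rw [hlam, if_neg hΩ, zero_mul, add_zero]
    exact ⟨hω0, fun hΩ' => absurd hΩ' hΩ, fun _ => ⟨rfl, hω0⟩⟩

/-- On the zero level set of `h`, the closed-form control satisfies
`L_f h(x) + L_g h(x) u(x) ≥ 0`; more precisely it equals `0` on `Ω`
and equals `ω(x) ≥ 0` off `Ω`. -/
theorem closed_form_boundary_inequality {n m : ℕ}
    (h : (Fin n → ℝ) → ℝ) (hh : ContDiff ℝ 1 h)
    (f : (Fin n → ℝ) → Fin n → ℝ) (hf : Continuous f)
    (g : (Fin n → ℝ) → Fin n → Fin m → ℝ) (hg : Continuous g)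
    (Q : (Fin n → ℝ) → Matrix (Fin m) (Fin m) ℝ) (hQ : ∀ x, (Q x).PosDef)
    (hQc : ∀ i j, Continuous fun x => Q x i j)
    (c : (Fin n → ℝ) → Fin m → ℝ) (hc : Continuous c)
    (γ : ℝ) (hγ : 0 < γ)
    (α : ℝ → ℝ) (hα0 : α 0 = 0) (hαmono : Monotone α)
    (hB : ∀ x, h x = 0 → LieF h f x ≤ 0 → LieG h g x ≠ 0)
    (ω : (Fin n → ℝ) → ℝ)
    (hω : ∀ x, ω x = LieF h f x
      - (∑ i, LieG h g x i * Matrix.mulVec (Q x)⁻¹ (c x) i) + α (h x))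
    (d : (Fin n → ℝ) → ℝ)
    (hd : ∀ x, d x = (∑ i, LieG h g x i * Matrix.mulVec (Q x)⁻¹ (LieG h g x) i)
      + γ⁻¹ * (h x) ^ 2)
    (lam : (Fin n → ℝ) → ℝ)
    (hlam : ∀ x, lam x = if ω x < 0 then -ω x / d x else 0)
    (u : (Fin n → ℝ) → Fin m → ℝ)
    (hu : ∀ x, u x = -(Matrix.mulVec (Q x)⁻¹ (fun i => c x i - LieG h g x i * lam x))) :
    ∀ x : Fin n → ℝ, h x = 0 →
      (0 ≤ LieF h f x + ∑ i, LieG h g x i * u x i) ∧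
      (ω x < 0 → LieF h f x + ∑ i, LieG h g x i * u x i = 0) ∧
      (¬ ω x < 0 →
        LieF h f x + ∑ i, LieG h g x i * u x i = ω x ∧ 0 ≤ ω x) :=
  closed_form_boundary_inequality_general h f g Q hQ c γ α hα0 hB ω hω d hd lam hlam u hu
end
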